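/- arXiv:2603.05823 — 5 statements merged into one kernel-verified Lean document; each statement's English description precedes it below -/
import Mathlib

section
/- In the field RatFunc ℚ of rational functions in one variable t over ℚ, the following identity holds: ((1 + t^4 + t^6 + t^8)(1 − t^6)(1 − t^4) · (1 + t^{−4} + t^{−6} + t^{−8})(1 − t^{−6})(1 − t^{−4})) / ((1 − t^{−6})(1 − t^{−4})(1 − t^{−2})) + ((1 + t^2 + t^4 + t^6)(1 − t^2)(1 − t^{10}) · (1 + t^{−2} + t^{−4} + t^{−6})(1 − t^{−2})(1 − t^{−10})) / ((1 − t^{−2})(1 − t^{−10})(1 − t^2)) = 1 − (t^2 + 2t^4 + t^6) + t^{14} + t^{16} + t^{18}. (This computes the ℂ*-equivariant Euler pairing χ(O_{D_4}, O_{D_4}) of the unique multiplicity-4 Cohen–Macaulay curve D_4 supported on the fixed line L, with arithmetic genus 0.) -/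
noncomputable def t : RatFunc ℚ := RatFunc.X

theorem RatFunc.X_pow_sub_one_ne_zero {K : Type*} [Field K] {k : ℕ} (hk : 0 < k) :
    (X : RatFunc K) ^ k - 1 ≠ 0 := by
  simpa [← RatFunc.algebraMap_X] using
    RatFunc.algebraMap_ne_zero (Polynomial.X_pow_sub_C_ne_zero hk (1 : K))

/- Writing `t ^ (-k) = (t ^ k)⁻¹`, the only denominators are powers of `t` and the factors
`t ^ k - 1`, none of which vanish; clearing them leaves a polynomial identity. -/
/-- The equivariant Euler pairing
`χ(O_{D₄}, O_{D₄}) = 1 − (t² + 2t⁴ + t⁶) + t¹⁴ + t¹⁶ + t¹⁸` of the unique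
multiplicity-4 Cohen–Macaulay curve `D₄` supported on the fixed line `L` of the
Mukai–Umemura threefold, with arithmetic genus 0. -/
theorem stmt_7 :
    ((1 + t ^ 4 + t ^ 6 + t ^ 8) * (1 - t ^ 6) * (1 - t ^ 4)
        * ((1 + t ^ (-4 : ℤ) + t ^ (-6 : ℤ) + t ^ (-8 : ℤ)) * (1 - t ^ (-6 : ℤ)) * (1 - t ^ (-4 : ℤ))))
        / ((1 - t ^ (-6 : ℤ)) * (1 - t ^ (-4 : ℤ)) * (1 - t ^ (-2 : ℤ)))
      + ((1 + t ^ 2 + t ^ 4 + t ^ 6) * (1 - t ^ 2) * (1 - t ^ 10)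
        * ((1 + t ^ (-2 : ℤ) + t ^ (-4 : ℤ) + t ^ (-6 : ℤ)) * (1 - t ^ (-2 : ℤ)) * (1 - t ^ (-10 : ℤ))))
        / ((1 - t ^ (-2 : ℤ)) * (1 - t ^ (-10 : ℤ)) * (1 - t ^ 2))
    = 1 - (t ^ 2 + 2 * t ^ 4 + t ^ 6) + t ^ 14 + t ^ 16 + t ^ 18 := by
  have ht : t ≠ 0 := RatFunc.X_ne_zero
  have h2 : t ^ 2 - 1 ≠ 0 := RatFunc.X_pow_sub_one_ne_zero two_pos
  have h4 : t ^ 4 - 1 ≠ 0 := RatFunc.X_pow_sub_one_ne_zero (by norm_num)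
  have h6 : t ^ 6 - 1 ≠ 0 := RatFunc.X_pow_sub_one_ne_zero (by norm_num)
  have h10 : t ^ 10 - 1 ≠ 0 := RatFunc.X_pow_sub_one_ne_zero (by norm_num)
  have h2' : 1 - t ^ 2 ≠ 0 := by rwa [← neg_sub, neg_ne_zero]
  simp only [zpow_neg]
  field_simp
  ring
end

section
/- Let F₁ = (1 + E(−4) + E(−6) + E(−8))·(1 − E(−6))·(1 − E(−4))·(1 − E(12)) and F₂ = (1 + E(−2) + E(−4) + E(−6))·(1 − E(−2))·(1 − E(−10))·(1 − E(10)) in ℚ[[λ]]. Then 2 · 21 · ( (144/22) · c₃(F₁)/((−12)·48) + (100/22) · c₃(F₂)/((−10)·(−40)) ) = 168. (This is the equivariant localization computation of the Donaldson–Thomas primary invariant ⟨τ₀(h₂)⟩₄ = 168 of the local Calabi–Yau 4-fold over the Mukai–Umemura threefold in curve class 4[line], where the only contributing fixed points of the moduli space are the multiplicity-4 lines D_{±4}.) -/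
noncomputable def E (a : ℤ) : PowerSeries ℚ :=
  PowerSeries.mk fun n => (a : ℚ) ^ n / n.factorial

noncomputable def c (k : ℕ) (F : PowerSeries ℚ) : ℚ := PowerSeries.coeff k F

/-! Since `E a * E b = E (a + b)` and `E 0 = 1`, each `Fᵢ` multiplies out to an integer
combination of exponentials `E a`, whose cubic coefficients are `a ^ 3 / 6`; what remains
is rational arithmetic. -/

lemma E_eq_rescale_exp (a : ℤ) : E a = PowerSeries.rescale (a : ℚ) (PowerSeries.exp ℚ) := by
  ext n
  simp [E, PowerSeries.exp, PowerSeries.coeff_rescale, div_eq_mul_inv]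

lemma E_add (a b : ℤ) : E (a + b) = E a * E b := by
  rw [E_eq_rescale_exp, E_eq_rescale_exp, E_eq_rescale_exp, Int.cast_add,
    PowerSeries.exp_mul_exp_eq_exp_add]

lemma E_zero : E 0 = 1 := by
  rw [E_eq_rescale_exp, Int.cast_zero, PowerSeries.rescale_zero_apply,
    PowerSeries.constantCoeff_exp, map_one]

lemma coeff_E (k : ℕ) (a : ℤ) :
    PowerSeries.coeff k (E a) = (a : ℚ) ^ k / k.factorial := by
  simp [E]

/-- Equivariant localization computation of the Donaldson–Thomas primary invariant
`⟨τ₀(h₂)⟩₄ = 168` of the local Calabi–Yau 4-fold over the Mukai–Umemura threefold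
in curve class `4[line]`; the only contributing fixed points are the multiplicity-4
lines `D₊₄`, `D₋₄`. -/
theorem stmt_10 :
    let F₁ : PowerSeries ℚ :=
      (1 + E (-4) + E (-6) + E (-8)) * (1 - E (-6)) * (1 - E (-4)) * (1 - E 12)
    let F₂ : PowerSeries ℚ :=
      (1 + E (-2) + E (-4) + E (-6)) * (1 - E (-2)) * (1 - E (-10)) * (1 - E 10)
    2 * 21 * ((144 / 22) * c 3 F₁ / ((-12) * 48)
        + (100 / 22) * c 3 F₂ / ((-10) * (-40))) = (168 : ℚ) := by
  intro F₁ F₂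
  simp only [F₁, F₂, c, ← E_zero, mul_add, add_mul, mul_sub, sub_mul, ← E_add, map_add, map_sub,
    coeff_E]
  norm_num [Nat.factorial]
end

section
/- Let F₁ = (1 + E(−4) + E(−6) + E(−8))·(1 − E(−6))·(1 − E(−4))·(1 − E(12)) and F₂ = (1 + E(−2) + E(−4) + E(−6))·(1 − E(−2))·(1 − E(−10))·(1 − E(10)) in ℚ[[λ]]. Then 2 · 21 · ( 12 · c₄(F₁)/((−12)·48) + 10 · c₄(F₂)/((−10)·(−40)) ) = −168. (This is the equivariant localization computation of the descendent invariant ⟨τ₁(h₁)⟩₄ = −168 of the local Calabi–Yau 4-fold over the Mukai–Umemura threefold in curve class 4[line].) -/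
lemma E_mul_E (a b : ℤ) : E a * E b = E (a + b) := by
  simp [E_eq_rescale_exp, PowerSeries.exp_mul_exp_eq_exp_add]

lemma c_E (k : ℕ) (a : ℤ) : c k (E a) = (a : ℚ) ^ k / k.factorial := by
  simp [c, E]

lemma c_add (k : ℕ) (F G : PowerSeries ℚ) : c k (F + G) = c k F + c k G :=
  map_add _ F G

lemma c_sub (k : ℕ) (F G : PowerSeries ℚ) : c k (F - G) = c k F - c k G :=
  map_sub _ F G

lemma c_one_of_ne_zero {k : ℕ} (hk : k ≠ 0) : c k 1 = 0 := by
  simp [c, PowerSeries.coeff_one, hk]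

lemma c_four_contribution_p12 :
    c 4 ((1 + E (-4) + E (-6) + E (-8)) * (1 - E (-6)) * (1 - E (-4)) * (1 - E 12)) = 4032 := by
  simp only [add_mul, sub_mul, mul_sub, one_mul, mul_one, E_mul_E, c_add, c_sub,
    c_one_of_ne_zero four_ne_zero, c_E]
  norm_num [Nat.factorial]

lemma c_four_contribution_p10 :
    c 4 ((1 + E (-2) + E (-4) + E (-6)) * (1 - E (-2)) * (1 - E (-10)) * (1 - E 10)) = 3200 := by
  simp only [add_mul, sub_mul, mul_sub, one_mul, mul_one, E_mul_E, c_add, c_sub,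
    c_one_of_ne_zero four_ne_zero, c_E]
  norm_num [Nat.factorial]

/-- Equivariant localization computation of the descendent invariant
`⟨τ₁(h₁)⟩₄ = −168` of the local Calabi–Yau 4-fold over the Mukai–Umemura threefold
in curve class `4[line]`. -/
theorem stmt_11 :
    let F₁ : PowerSeries ℚ :=
      (1 + E (-4) + E (-6) + E (-8)) * (1 - E (-6)) * (1 - E (-4)) * (1 - E 12)
    let F₂ : PowerSeries ℚ :=
      (1 + E (-2) + E (-4) + E (-6)) * (1 - E (-2)) * (1 - E (-10)) * (1 - E 10)
    2 * 21 * (12 * c 4 F₁ / ((-12) * 48)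
        + 10 * c 4 F₂ / ((-10) * (-40))) = (-168 : ℚ) := by
  intro F₁ F₂
  rw [c_four_contribution_p12, c_four_contribution_p10]
  norm_num
end

section
/- Let G₁ = (1 − E(−6))·(1 − E(−4))·(1 − E(12)) and G₂ = (1 − E(−2))·(1 − E(−10))·(1 − E(10)) in ℚ[[λ]]. Then the following three identities hold: (i) 2 · ( (144/22) · c₃(G₁)/((−12)·48) + (100/22) · c₃(G₂)/((−10)·(−40)) ) = 2; (ii) 2 · ( 12 · c₄(G₁)/((−12)·48) + 10 · c₄(G₂)/((−10)·(−40)) ) = 22; (iii) 2 · ( c₅(G₁)/((−12)·48) + c₅(G₂)/((−10)·(−40)) ) = −1/3. (These are the localization computations of the degree-1 invariants ⟨τ₀(h₂)⟩₁ = 2, ⟨τ₁(h₁)⟩₁ = 22, ⟨τ₂(1)⟩₁ = −1/3 of the local Calabi–Yau 4-fold over the Mukai–Umemura threefold.) -/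
lemma one_sub_E_mul_one_sub_E_mul_one_sub_E (a b d : ℤ) :
    (1 - E a) * (1 - E b) * (1 - E d) =
      E 0 - E a - E b - E d + E (a + b) + E (a + d) + E (b + d) - E (a + b + d) := by
  rw [E_zero, ← E_mul_E (a + b) d, ← E_mul_E a b, ← E_mul_E a d, ← E_mul_E b d]
  ring

lemma c_one_sub_E_mul_one_sub_E_mul_one_sub_E (a b d : ℤ) {k : ℕ} (hk : k ≠ 0) :
    c k ((1 - E a) * (1 - E b) * (1 - E d)) =
      (((a + b : ℤ) : ℚ) ^ k + ((a + d : ℤ) : ℚ) ^ k + ((b + d : ℤ) : ℚ) ^ k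
        - (a : ℚ) ^ k - (b : ℚ) ^ k - (d : ℚ) ^ k - ((a + b + d : ℤ) : ℚ) ^ k) / k.factorial := by
  rw [one_sub_E_mul_one_sub_E_mul_one_sub_E]
  simp only [c, map_add, map_sub, coeff_E, Int.cast_zero, zero_pow hk, zero_div]
  ring

/-- Localization computations of the degree-1 invariants `⟨τ₀(h₂)⟩₁ = 2`,
`⟨τ₁(h₁)⟩₁ = 22`, `⟨τ₂(1)⟩₁ = −1/3` of the local Calabi–Yau 4-fold over the
Mukai–Umemura threefold. -/
theorem stmt_13 :
    let G₁ : PowerSeries ℚ := (1 - E (-6)) * (1 - E (-4)) * (1 - E 12)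
    let G₂ : PowerSeries ℚ := (1 - E (-2)) * (1 - E (-10)) * (1 - E 10)
    (2 * ((144 / 22) * c 3 G₁ / ((-12) * 48)
        + (100 / 22) * c 3 G₂ / ((-10) * (-40))) = (2 : ℚ))
    ∧ (2 * (12 * c 4 G₁ / ((-12) * 48)
        + 10 * c 4 G₂ / ((-10) * (-40))) = (22 : ℚ))
    ∧ (2 * (c 5 G₁ / ((-12) * 48) + c 5 G₂ / ((-10) * (-40))) = (-1 / 3 : ℚ)) := by
  norm_num [c_one_sub_E_mul_one_sub_E_mul_one_sub_E, Nat.factorial]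
end

section
/- In the polynomial ring R = ℚ[a₁,…,a₁₂], consider the ideals I₁ = ⟨a₁, a₂, a₃, a₄, a₅, a₆, a₇, a₈, a₁₀, a₁₁, a₁₂⟩, I₂ = ⟨a₁, a₂, a₃, a₄, a₆, a₇, a₈, a₁₁, a₁₂, 6a₅ + a₁₀, a₁₀²⟩, I₃ = ⟨a₂, a₃, a₄, a₇, a₈, a₁₂, 5a₆ + a₁₁, 6a₅ + a₁₀, 10a₁ − a₁₁, a₁₁², a₁₀a₁₁, 5a₁₀² − 6a₉a₁₁⟩, and I₄ = ⟨a₃, a₄, a₈, a₇ + 3a₁₂, 5a₆ + a₁₁, 6a₅ + a₁₀, 5a₂ − 9a₁₂, 10a₁ − a₁₁, a₁₀a₁₂, a₁₁², a₁₀a₁₁ − 18a₉a₁₂, 5a₁₀² − 6a₉a₁₁ + 12a₁₂⟩. Then I₁ = I₂ + ⟨a₅⟩, I₂ = I₃ + ⟨a₁⟩, and I₃ = I₄ + ⟨a₁₂⟩. -/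
/-! Each equality is checked on generators: every generator of either side is an explicit
combination of at most two elements of the other ideal. For `I₂ ≤ I₃ + ⟨a₁⟩` one first recovers
`a₁₁ = 10 a₁ - (10 a₁ - a₁₁)`, which then yields `5 a₆` and `5 a₁₀²`; dividing by `5` needs `ℚ`. -/

open MvPolynomial

/-- `a i` is the variable `aᵢ` (for `1 ≤ i ≤ 12`) of `ℚ[a₁,…,a₁₂]`. -/
noncomputable def a (i : ℕ) : MvPolynomial (Fin 12) ℚ := X (Fin.ofNat 12 (i - 1 : ℕ))

/-- Defining ideal of the fixed line `D₁ = L`. -/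
noncomputable def I₁ : Ideal (MvPolynomial (Fin 12) ℚ) :=
  Ideal.span {a 1, a 2, a 3, a 4, a 5, a 6, a 7, a 8, a 10, a 11, a 12}

/-- Defining ideal of the multiplicity-2 curve `D₂`. -/
noncomputable def I₂ : Ideal (MvPolynomial (Fin 12) ℚ) :=
  Ideal.span {a 1, a 2, a 3, a 4, a 6, a 7, a 8, a 11, a 12, 6 * a 5 + a 10, a 10 ^ 2}

/-- Defining ideal of the multiplicity-3 curve `D₃`. -/
noncomputable def I₃ : Ideal (MvPolynomial (Fin 12) ℚ) :=
  Ideal.span {a 2, a 3, a 4, a 7, a 8, a 12, 5 * a 6 + a 11, 6 * a 5 + a 10,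
    10 * a 1 - a 11, a 11 ^ 2, a 10 * a 11, 5 * a 10 ^ 2 - 6 * a 9 * a 11}

/-- Defining ideal of the multiplicity-4 curve `D₄`. -/
noncomputable def I₄ : Ideal (MvPolynomial (Fin 12) ℚ) :=
  Ideal.span {a 3, a 4, a 8, a 7 + 3 * a 12, 5 * a 6 + a 11, 6 * a 5 + a 10,
    5 * a 2 - 9 * a 12, 10 * a 1 - a 11, a 10 * a 12, a 11 ^ 2,
    a 10 * a 11 - 18 * a 9 * a 12, 5 * a 10 ^ 2 - 6 * a 9 * a 11 + 12 * a 12}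

namespace Ideal

variable {R : Type*} [CommRing R] {I : Ideal R} {x g₁ g₂ c₁ c₂ : R}

theorem mem_of_eq_mul_add_mul (hx : x = c₁ * g₁ + c₂ * g₂) (h₁ : g₁ ∈ I) (h₂ : g₂ ∈ I) :
    x ∈ I :=
  hx ▸ I.add_mem (I.mul_mem_left c₁ h₁) (I.mul_mem_left c₂ h₂)

theorem mem_of_ofNat_mul_mem [Algebra ℚ R] (n : ℕ) [n.AtLeastTwo]
    (h : (ofNat(n) : R) * x ∈ I) : x ∈ I := by
  have hn : IsUnit (ofNat(n) : R) := by
    simpa only [map_ofNat] using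
      (IsUnit.mk0 (ofNat(n) : ℚ) (OfNat.ofNat_ne_zero n)).map (algebraMap ℚ R)
  exact (I.unit_mul_mem_iff_mem hn).1 h

end Ideal

open Ideal

theorem I₁_le_I₂_add_span_a₅ : I₁ ≤ I₂ + span {a 5} := by
  have gen {g} (hg : g ∈ _) : g ∈ I₂ + span {a 5} := Submodule.mem_sup_left (subset_span hg)
  have ha₅ : a 5 ∈ I₂ + span {a 5} := Submodule.mem_sup_right (mem_span_singleton_self _)
  have ha₁₀ : a 10 ∈ I₂ + span {a 5} :=
    mem_of_eq_mul_add_mul (by ring : a 10 = 1 * (6 * a 5 + a 10) + -6 * a 5) (gen (by simp)) ha₅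
  refine span_le.2 ?_
  simp only [Set.insert_subset_iff, Set.singleton_subset_iff, SetLike.mem_coe, ha₅, ha₁₀,
    true_and]
  and_intros <;> exact gen (by simp)

theorem I₂_add_span_a₅_le_I₁ : I₂ + span {a 5} ≤ I₁ := by
  have gen {g} (hg : g ∈ _) : g ∈ I₁ := subset_span hg
  have h₁ : 6 * a 5 + a 10 ∈ I₁ :=
    mem_of_eq_mul_add_mul (by ring : 6 * a 5 + a 10 = 6 * a 5 + 1 * a 10)
      (gen (by simp)) (gen (by simp))
  have h₂ : a 10 ^ 2 ∈ I₁ := pow_mem_of_mem _ (gen (by simp)) 2 two_pos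
  refine sup_le (span_le.2 ?_) ((span_singleton_le_iff_mem _).2 (gen (by simp)))
  simp only [Set.insert_subset_iff, Set.singleton_subset_iff, SetLike.mem_coe, h₁, h₂,
    and_true]
  and_intros <;> exact gen (by simp)

theorem I₂_le_I₃_add_span_a₁ : I₂ ≤ I₃ + span {a 1} := by
  have gen {g} (hg : g ∈ _) : g ∈ I₃ + span {a 1} := Submodule.mem_sup_left (subset_span hg)
  have ha₁ : a 1 ∈ I₃ + span {a 1} := Submodule.mem_sup_right (mem_span_singleton_self _)
  have ha₁₁ : a 11 ∈ I₃ + span {a 1} :=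
    mem_of_eq_mul_add_mul (by ring : a 11 = 10 * a 1 + -1 * (10 * a 1 - a 11)) ha₁ (gen (by simp))
  have ha₆ : a 6 ∈ I₃ + span {a 1} := mem_of_ofNat_mul_mem 5 <|
    mem_of_eq_mul_add_mul (by ring : 5 * a 6 = 1 * (5 * a 6 + a 11) + -1 * a 11)
      (gen (by simp)) ha₁₁
  have ha₁₀_sq : a 10 ^ 2 ∈ I₃ + span {a 1} := mem_of_ofNat_mul_mem 5 <|
    mem_of_eq_mul_add_mul
      (by ring : 5 * a 10 ^ 2 = 1 * (5 * a 10 ^ 2 - 6 * a 9 * a 11) + 6 * a 9 * a 11)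
      (gen (by simp)) ha₁₁
  refine span_le.2 ?_
  simp only [Set.insert_subset_iff, Set.singleton_subset_iff, SetLike.mem_coe, ha₁, ha₆, ha₁₁,
    ha₁₀_sq, true_and, and_true]
  and_intros <;> exact gen (by simp)

theorem I₃_add_span_a₁_le_I₂ : I₃ + span {a 1} ≤ I₂ := by
  have gen {g} (hg : g ∈ _) : g ∈ I₂ := subset_span hg
  have h₁ : 5 * a 6 + a 11 ∈ I₂ :=
    mem_of_eq_mul_add_mul (by ring : 5 * a 6 + a 11 = 5 * a 6 + 1 * a 11)
      (gen (by simp)) (gen (by simp))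
  have h₂ : 10 * a 1 - a 11 ∈ I₂ :=
    mem_of_eq_mul_add_mul (by ring : 10 * a 1 - a 11 = 10 * a 1 + -1 * a 11)
      (gen (by simp)) (gen (by simp))
  have h₃ : a 11 ^ 2 ∈ I₂ := pow_mem_of_mem _ (gen (by simp)) 2 two_pos
  have h₄ : a 10 * a 11 ∈ I₂ := mul_mem_left _ _ (gen (by simp))
  have h₅ : 5 * a 10 ^ 2 - 6 * a 9 * a 11 ∈ I₂ :=
    mem_of_eq_mul_add_mul
      (by ring : 5 * a 10 ^ 2 - 6 * a 9 * a 11 = 5 * a 10 ^ 2 + -6 * a 9 * a 11)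
      (gen (by simp)) (gen (by simp))
  refine sup_le (span_le.2 ?_) ((span_singleton_le_iff_mem _).2 (gen (by simp)))
  simp only [Set.insert_subset_iff, Set.singleton_subset_iff, SetLike.mem_coe, h₁, h₂, h₃, h₄,
    h₅, true_and, and_true]
  and_intros <;> exact gen (by simp)

theorem I₃_le_I₄_add_span_a₁₂ : I₃ ≤ I₄ + span {a 12} := by
  have gen {g} (hg : g ∈ _) : g ∈ I₄ + span {a 12} := Submodule.mem_sup_left (subset_span hg)
  have ha₁₂ : a 12 ∈ I₄ + span {a 12} := Submodule.mem_sup_right (mem_span_singleton_self _)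
  have ha₂ : a 2 ∈ I₄ + span {a 12} := mem_of_ofNat_mul_mem 5 <|
    mem_of_eq_mul_add_mul (by ring : 5 * a 2 = 1 * (5 * a 2 - 9 * a 12) + 9 * a 12)
      (gen (by simp)) ha₁₂
  have ha₇ : a 7 ∈ I₄ + span {a 12} :=
    mem_of_eq_mul_add_mul (by ring : a 7 = 1 * (a 7 + 3 * a 12) + -3 * a 12) (gen (by simp)) ha₁₂
  have ha₁₀a₁₁ : a 10 * a 11 ∈ I₄ + span {a 12} :=
    mem_of_eq_mul_add_mul
      (by ring : a 10 * a 11 = 1 * (a 10 * a 11 - 18 * a 9 * a 12) + 18 * a 9 * a 12)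
      (gen (by simp)) ha₁₂
  have hquadric : 5 * a 10 ^ 2 - 6 * a 9 * a 11 ∈ I₄ + span {a 12} :=
    mem_of_eq_mul_add_mul
      (by ring : 5 * a 10 ^ 2 - 6 * a 9 * a 11 =
        1 * (5 * a 10 ^ 2 - 6 * a 9 * a 11 + 12 * a 12) + -12 * a 12)
      (gen (by simp)) ha₁₂
  refine span_le.2 ?_
  simp only [Set.insert_subset_iff, Set.singleton_subset_iff, SetLike.mem_coe, ha₂, ha₇, ha₁₂,
    ha₁₀a₁₁, hquadric, true_and, and_true]
  and_intros <;> exact gen (by simp)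

theorem I₄_add_span_a₁₂_le_I₃ : I₄ + span {a 12} ≤ I₃ := by
  have gen {g} (hg : g ∈ _) : g ∈ I₃ := subset_span hg
  have h₁ : a 7 + 3 * a 12 ∈ I₃ :=
    mem_of_eq_mul_add_mul (by ring : a 7 + 3 * a 12 = 1 * a 7 + 3 * a 12)
      (gen (by simp)) (gen (by simp))
  have h₂ : 5 * a 2 - 9 * a 12 ∈ I₃ :=
    mem_of_eq_mul_add_mul (by ring : 5 * a 2 - 9 * a 12 = 5 * a 2 + -9 * a 12)
      (gen (by simp)) (gen (by simp))
  have h₃ : a 10 * a 12 ∈ I₃ := mul_mem_left _ _ (gen (by simp))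
  have h₄ : a 10 * a 11 - 18 * a 9 * a 12 ∈ I₃ :=
    mem_of_eq_mul_add_mul
      (by ring : a 10 * a 11 - 18 * a 9 * a 12 = 1 * (a 10 * a 11) + -18 * a 9 * a 12)
      (gen (by simp)) (gen (by simp))
  have h₅ : 5 * a 10 ^ 2 - 6 * a 9 * a 11 + 12 * a 12 ∈ I₃ :=
    mem_of_eq_mul_add_mul
      (by ring : 5 * a 10 ^ 2 - 6 * a 9 * a 11 + 12 * a 12 =
        1 * (5 * a 10 ^ 2 - 6 * a 9 * a 11) + 12 * a 12)
      (gen (by simp)) (gen (by simp))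
  refine sup_le (span_le.2 ?_) ((span_singleton_le_iff_mem _).2 (gen (by simp)))
  simp only [Set.insert_subset_iff, Set.singleton_subset_iff, SetLike.mem_coe, h₁, h₂, h₃, h₄,
    h₅, true_and, and_true]
  and_intros <;> exact gen (by simp)

/-- The Cohen–Macaulay filtration `L = D₁ ⊂ D₂ ⊂ D₃ ⊂ D₄`: the kernel of each
restriction map `O_{D_{k+1}} ↠ O_{D_k}` is generated by the class of `a₅`, `a₁`,
`a₁₂` respectively. -/
theorem stmt_16 :
    I₁ = I₂ + Ideal.span {a 5} ∧ I₂ = I₃ + Ideal.span {a 1} ∧ I₃ = I₄ + Ideal.span {a 12} :=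
  ⟨le_antisymm I₁_le_I₂_add_span_a₅ I₂_add_span_a₅_le_I₁,
    le_antisymm I₂_le_I₃_add_span_a₁ I₃_add_span_a₁_le_I₂,
    le_antisymm I₃_le_I₄_add_span_a₁₂ I₄_add_span_a₁₂_le_I₃⟩
end
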